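/- For all positive integers k, the k-th positive element of the greedy B_3-set satisfies γ_k(3) ≤ (1/12)·k^5 + (5/12)·k^4 + (3/4)·k^3 + (13/12)·k^2 + (2/3)·k. -/

import Mathlib

/-!
If inserting `x` into a `B_h`-set `A ∋ 0` destroys the `B_h` property, cancelling the common
part of two colliding `h`-fold sums leaves a relation `c • x + ΣT = ΣS` with `T`, `S` disjoint
multisets from `A` and `|T| + c = |S| ≤ h`. So `x` is one of at most `Σ_{i<j≤h} #T · #S`
forbidden values, where `T` ranges over `i`-multisets and `S` over `j`-multisets of `A`, and `S`
avoids the elements of `T`. Every `y < γ_{k+1}` is in `A_k = {γ_0, …, γ_k}` or forbidden for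
`A_k`, hence `γ_{k+1} ≤ (k + 1) + #forbidden(A_k)`. For `h = 3` and `|A_k| ≤ k + 1` this is a
quintic bound in `k`, below the stated one once `k ≥ 1` (and `γ_1 = 1` is checked directly).
-/

/-- A set `A` of nonnegative integers is a `B_h`-set if every solution to
`a_1 + ... + a_h = b_1 + ... + b_h` with all `a_i, b_i ∈ A` has
`{a_1, ..., a_h} = {b_1, ..., b_h}` as multisets. -/
def IsBhSet (h : ℕ) (A : Set ℕ) : Prop :=
  ∀ a b : Fin h → ℕ, (∀ i, a i ∈ A) → (∀ i, b i ∈ A) →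
    (∑ i, a i) = (∑ i, b i) →
    Multiset.map a Finset.univ.val = Multiset.map b Finset.univ.val

/-- Auxiliary construction of the greedy `B_h`-set: `greedyAux h k` is the pair
consisting of the `k`-th element `γ_k(h)` of the greedy `B_h`-set together with
the finite set `{γ_0(h), ..., γ_k(h)}`.  We have `γ_0(h) = 0`, `γ_1(h) = 1`, and
for `k ≥ 1`, `γ_{k+1}(h)` is the smallest integer greater than `γ_k(h)` such
that `{γ_0(h), ..., γ_k(h), γ_{k+1}(h)}` is a `B_h`-set. -/
noncomputable def greedyAux (h : ℕ) : ℕ → ℕ × Finset ℕ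
  | 0 => (0, {0})
  | (k + 1) =>
    let p := greedyAux h k
    let g := if k = 0 then 1
      else sInf {x : ℕ | p.1 < x ∧ IsBhSet h ((insert x p.2 : Finset ℕ) : Set ℕ)}
    (g, insert g p.2)

/-- `greedy h k` is the `k`-th element `γ_k(h)` of the greedy `B_h`-set. -/
noncomputable def greedy (h k : ℕ) : ℕ := (greedyAux h k).1

open Finset

theorem Multiset.exists_fin_map_univ_eq {α : Type*} {s : Multiset α} {n : ℕ}
    (hs : Multiset.card s = n) : ∃ f : Fin n → α, univ.val.map f = s := by
  subst hs
  refine ⟨fun i => s.toList.get (i.cast (by simp)), ?_⟩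
  conv_rhs => rw [← Multiset.coe_toList s]
  rw [Fin.univ_val_map, Multiset.coe_eq_coe]
  have : List.ofFn (fun i : Fin (Multiset.card s) => s.toList.get (i.cast (by simp))) = s.toList :=
    List.ext_get (by simp) (by simp)
  rw [this]

theorem isBhSet_iff_multiset {h : ℕ} {A : Set ℕ} :
    IsBhSet h A ↔ ∀ s t : Multiset ℕ, Multiset.card s = h → Multiset.card t = h →
      (∀ x ∈ s, x ∈ A) → (∀ x ∈ t, x ∈ A) → s.sum = t.sum → s = t := by
  constructor
  · intro hA s t hs ht hsA htA hst
    obtain ⟨f, rfl⟩ := Multiset.exists_fin_map_univ_eq hs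
    obtain ⟨g, rfl⟩ := Multiset.exists_fin_map_univ_eq ht
    simp only [Multiset.mem_map, mem_univ_val, true_and, forall_exists_index,
      forall_apply_eq_imp_iff] at hsA htA
    exact hA f g hsA htA hst
  · intro hA a b ha hb hab
    exact hA _ _ (by simp) (by simp) (by simpa using ha) (by simpa using hb) hab

theorem IsBhSet.mono {h : ℕ} {A B : Set ℕ} (hAB : A ⊆ B) (hB : IsBhSet h B) : IsBhSet h A :=
  fun a b ha hb => hB a b (fun i => hAB (ha i)) (fun i => hAB (hb i))

theorem IsBhSet.eq_of_card_le {h : ℕ} {A : Set ℕ} (hA : IsBhSet h A) (h0 : 0 ∈ A)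
    {s t : Multiset ℕ} (hs : Multiset.card s ≤ h) (hst : Multiset.card s = Multiset.card t)
    (hsA : ∀ x ∈ s, x ∈ A) (htA : ∀ x ∈ t, x ∈ A) (hsum : s.sum = t.sum) : s = t := by
  have pad := isBhSet_iff_multiset.1 hA (s + .replicate (h - Multiset.card s) 0)
    (t + .replicate (h - Multiset.card s) 0)
  simp only [Multiset.card_add, Multiset.card_replicate, Multiset.mem_add, Multiset.sum_add,
    Multiset.sum_replicate, smul_zero, add_left_inj] at pad
  refine pad (by omega) (by omega) ?_ ?_ hsum
  · rintro x (hx | hx)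
    exacts [hsA x hx, Multiset.eq_of_mem_replicate hx ▸ h0]
  · rintro x (hx | hx)
    exacts [htA x hx, Multiset.eq_of_mem_replicate hx ▸ h0]

theorem Multiset.eq_replicate_zero_add_replicate_one {s : Multiset ℕ}
    (hs : ∀ x ∈ s, x ≤ 1) :
    s = replicate (card s - s.sum) 0 + replicate s.sum 1 := by
  induction s using Multiset.induction_on with
  | empty => simp
  | cons a s ih =>
    rw [Multiset.forall_mem_cons] at hs
    have hsum : s.sum ≤ card s := by simpa using Multiset.sum_le_card_nsmul s 1 hs.2
    have ha := hs.1
    interval_cases a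
    · rw [card_cons, sum_cons, zero_add, Nat.sub_add_comm hsum, replicate_succ, cons_add,
        ← ih hs.2]
    · rw [card_cons, sum_cons, add_comm 1, replicate_succ, add_cons, Nat.add_sub_add_right,
        ← ih hs.2]

theorem isBhSet_zero_one (h : ℕ) : IsBhSet h {0, 1} := by
  rw [isBhSet_iff_multiset]
  intro s t hs ht hsA htA hst
  have hs1 : ∀ x ∈ s, x ≤ 1 := fun x hx => by rcases hsA x hx with rfl | rfl <;> simp
  have ht1 : ∀ x ∈ t, x ≤ 1 := fun x hx => by rcases htA x hx with rfl | rfl <;> simp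
  rw [Multiset.eq_replicate_zero_add_replicate_one hs1,
    Multiset.eq_replicate_zero_add_replicate_one ht1, hs, ht, hst]

/-- Contains every `x` with `(j - i) * x + ΣT = ΣS` for an `i`-multiset `T` and a `j`-multiset `S`
of elements of `A` avoiding those of `T`; the other pairs `(T, S)` only add junk values. -/
def forbiddenValues (A : Finset ℕ) (i j : ℕ) : Finset ℕ :=
  (A.sym i).biUnion fun T =>
    ((A.filter (· ∉ (T : Multiset ℕ))).sym j).image fun S => (S.1.sum - T.1.sum) / (j - i)

def forbidden (h : ℕ) (A : Finset ℕ) : Finset ℕ :=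
  ((range (h + 1) ×ˢ range (h + 1)).filter fun p => p.1 < p.2).biUnion
    fun p => forbiddenValues A p.1 p.2

theorem mem_forbiddenValues {A : Finset ℕ} {x c : ℕ} {T S : Multiset ℕ} (hc : 0 < c)
    (hTS : Multiset.card T + c = Multiset.card S) (hT : ∀ t ∈ T, t ∈ A)
    (hS : ∀ s ∈ S, s ∈ A) (hd : Disjoint T S) (heq : c * x + T.sum = S.sum) :
    x ∈ forbiddenValues A (Multiset.card T) (Multiset.card S) := by
  refine mem_biUnion.2 ⟨⟨T, rfl⟩, mem_sym_iff.2 hT, mem_image.2 ⟨⟨S, rfl⟩, ?_, ?_⟩⟩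
  · exact mem_sym_iff.2 fun s hs => mem_filter.2 ⟨hS s hs, Multiset.disjoint_right.1 hd hs⟩
  · change (S.sum - T.sum) / (Multiset.card S - Multiset.card T) = x
    rw [← heq, ← hTS, Nat.add_sub_cancel, Nat.add_sub_cancel_left, Nat.mul_div_cancel_left _ hc]

theorem mem_forbidden {h : ℕ} {A : Finset ℕ} {x c : ℕ} {T S : Multiset ℕ} (hc : 0 < c)
    (hTS : Multiset.card T + c = Multiset.card S) (hSh : Multiset.card S ≤ h)
    (hT : ∀ t ∈ T, t ∈ A) (hS : ∀ s ∈ S, s ∈ A) (hd : Disjoint T S)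
    (heq : c * x + T.sum = S.sum) : x ∈ forbidden h A :=
  mem_biUnion.2 ⟨(Multiset.card T, Multiset.card S),
    by simp only [mem_filter, mem_product, mem_range]; omega,
    mem_forbiddenValues hc hTS hT hS hd heq⟩

theorem mem_forbidden_of_disjoint_of_sum_eq {h : ℕ} {A : Finset ℕ} {x : ℕ}
    {U V : Multiset ℕ} (hU : ∀ u ∈ U, u = x ∨ u ∈ A) (hV : ∀ v ∈ V, v ∈ A)
    (hx : x ∈ U) (hcard : Multiset.card U = Multiset.card V) (hVh : Multiset.card V ≤ h)
    (hsum : U.sum = V.sum) (hd : Disjoint U V) : x ∈ forbidden h A := by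
  have hsplit : .replicate (U.count x) x + U.filter (· ≠ x) = U := by
    rw [← Multiset.filter_eq', Multiset.filter_add_not]
  refine mem_forbidden (Multiset.count_pos.2 hx) ?_ hVh ?_ hV
    (hd.mono_left (Multiset.filter_le (· ≠ x) U)) ?_
  · conv_rhs => rw [← hcard, ← hsplit]
    rw [Multiset.card_add, Multiset.card_replicate, add_comm]
  · intro t ht
    rw [Multiset.mem_filter] at ht
    exact (hU t ht.1).resolve_left ht.2
  · conv_rhs => rw [← hsum, ← hsplit]
    rw [Multiset.sum_add, Multiset.sum_replicate, smul_eq_mul]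

theorem mem_forbidden_of_not_isBhSet_insert {h : ℕ} {A : Finset ℕ} {x : ℕ}
    (hA : IsBhSet h A) (h0 : 0 ∈ A) (hx : ¬IsBhSet h (insert x A : Finset ℕ)) :
    x ∈ forbidden h A := by
  simp only [isBhSet_iff_multiset, not_forall] at hx
  obtain ⟨s, t, hs, ht, hsA, htA, hst, hne⟩ := hx
  have hs' : s - t + s ∩ t = s := Multiset.sub_add_inter s t
  have ht' : t - s + s ∩ t = t := by rw [Multiset.inter_comm]; exact Multiset.sub_add_inter t s
  have hcard : Multiset.card (s - t) = Multiset.card (t - s) := by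
    have h₁ := congrArg Multiset.card hs'; have h₂ := congrArg Multiset.card ht'
    simp only [Multiset.card_add] at h₁ h₂; omega
  have hsum : (s - t).sum = (t - s).sum := by
    have h₁ := congrArg Multiset.sum hs'; have h₂ := congrArg Multiset.sum ht'
    simp only [Multiset.sum_add] at h₁ h₂; omega
  have hd : Disjoint (s - t) (t - s) := Multiset.disjoint_left.2 fun {a} ha hb => by
    rw [← Multiset.count_pos, Multiset.count_sub] at ha hb; omega
  have hsA' : ∀ u ∈ s - t, u = x ∨ u ∈ A := fun u hu => by
    simpa using hsA u (Multiset.mem_of_le (Multiset.sub_le_self _ _) hu)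
  have htA' : ∀ u ∈ t - s, u = x ∨ u ∈ A := fun u hu => by
    simpa using htA u (Multiset.mem_of_le (Multiset.sub_le_self _ _) hu)
  have hcard_le : Multiset.card (t - s) ≤ h :=
    ht ▸ Multiset.card_le_card (Multiset.sub_le_self _ _)
  by_cases hxs : x ∈ s - t
  · refine mem_forbidden_of_disjoint_of_sum_eq hsA' (fun v hv => ?_) hxs hcard hcard_le hsum hd
    exact (htA' v hv).resolve_left fun hvx => Multiset.disjoint_left.1 hd hxs (hvx ▸ hv)
  by_cases hxt : x ∈ t - s
  · refine mem_forbidden_of_disjoint_of_sum_eq htA' (fun v hv => ?_) hxt hcard.symm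
      (hcard ▸ hcard_le) hsum.symm hd.symm
    exact (hsA' v hv).resolve_left fun hvx => Multiset.disjoint_left.1 hd (hvx ▸ hv) hxt
  have hcancel := hA.eq_of_card_le h0 (hcard ▸ hcard_le) hcard
    (fun u hu => (hsA' u hu).resolve_left fun hux => hxs (hux ▸ hu))
    (fun u hu => (htA' u hu).resolve_left fun hux => hxt (hux ▸ hu)) hsum
  rw [hcancel] at hs'
  exact absurd (hs'.symm.trans ht') hne

theorem Nat.multichoose_le_multichoose {m n : ℕ} (k : ℕ) (h : m ≤ n) :
    m.multichoose k ≤ n.multichoose k := by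
  rw [Nat.multichoose_eq, Nat.multichoose_eq]
  exact Nat.choose_le_choose _ (by omega)

section Multichoose

variable {K : Type*} [Field K] [CharZero K]

theorem Nat.cast_multichoose_two (n : ℕ) : (n.multichoose 2 : K) = n * (n + 1) / 2 := by
  induction n with
  | zero => simp [Nat.multichoose_zero_succ]
  | succ n ih =>
    rw [Nat.multichoose_succ_succ, Nat.cast_add, ih, Nat.multichoose_one_right]
    push_cast; ring

theorem Nat.cast_multichoose_three (n : ℕ) :
    (n.multichoose 3 : K) = n * (n + 1) * (n + 2) / 6 := by
  induction n with
  | zero => simp [Nat.multichoose_zero_succ]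
  | succ n ih =>
    rw [Nat.multichoose_succ_succ, Nat.cast_add, ih, Nat.cast_multichoose_two]
    push_cast; ring

end Multichoose

theorem Finset.card_sym_le {α : Type*} [DecidableEq α] (A : Finset α) (n : ℕ) :
    (A.sym n).card ≤ A.card.multichoose n := by
  have hs : Set.SurjOn (Sym.map Subtype.val) ((univ : Finset (Sym A n)) : Set (Sym A n))
      (A.sym n : Set (Sym α n)) := by
    intro m hm
    refine ⟨⟨m.1.attach.map fun y => ⟨y.1, mem_sym_iff.1 hm _ y.2⟩, by simp⟩,
      mem_coe.2 (mem_univ _), Subtype.ext ?_⟩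
    simp [Sym.map, Multiset.map_map]
  simpa [Sym.card_sym_eq_multichoose] using card_le_card_of_surjOn _ hs

theorem card_forbiddenValues_le {A : Finset ℕ} {i j m : ℕ}
    (hm : ∀ T ∈ A.sym i, (A.filter (· ∉ (T : Multiset ℕ))).card ≤ m) :
    (forbiddenValues A i j).card ≤ A.card.multichoose i * m.multichoose j := by
  refine card_biUnion_le.trans <|
    (sum_le_card_nsmul _ _ (m.multichoose j) fun T hT => ?_).trans ?_
  · exact card_image_le.trans <| (card_sym_le _ j).trans <|
      Nat.multichoose_le_multichoose j (hm T hT)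
  · exact Nat.mul_le_mul_right _ (card_sym_le A i)

theorem card_filter_notMem_sym_lt {A : Finset ℕ} {i : ℕ} (hi : 0 < i) {T : Sym ℕ i}
    (hT : T ∈ A.sym i) : (A.filter (· ∉ (T : Multiset ℕ))).card < A.card := by
  obtain ⟨t, ht⟩ := Multiset.card_pos_iff_exists_mem.1 (T.2.symm ▸ hi)
  exact card_lt_card
    ⟨filter_subset _ _, fun h => (mem_filter.1 (h (mem_sym_iff.1 hT t ht))).2 ht⟩

theorem card_forbidden_three_le {A : Finset ℕ} {n : ℕ} (hA : A.card ≤ n + 1) :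
    (forbidden 3 A).card ≤ (n + 1) + (n + 1).multichoose 2 + (n + 1).multichoose 3
      + (n + 1) * n.multichoose 2 + (n + 1) * n.multichoose 3
      + (n + 1).multichoose 2 * n.multichoose 3 := by
  have h0 (j : ℕ) : (forbiddenValues A 0 j).card ≤ (n + 1).multichoose j := by
    simpa using card_forbiddenValues_le (i := 0) (j := j) fun _ _ => (card_filter_le _ _).trans hA
  have hpos (i j : ℕ) (hi : 0 < i) :
      (forbiddenValues A i j).card ≤ (n + 1).multichoose i * n.multichoose j :=
    (card_forbiddenValues_le fun _ hT => Nat.le_of_lt_succ <|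
      (card_filter_notMem_sym_lt hi hT).trans_le hA).trans <|
      Nat.mul_le_mul_right _ (Nat.multichoose_le_multichoose i hA)
  have hpairs : ((range 4 ×ˢ range 4).filter fun p : ℕ × ℕ => p.1 < p.2) =
      {(0, 1), (0, 2), (0, 3), (1, 2), (1, 3), (2, 3)} := by decide
  refine card_biUnion_le.trans ?_
  rw [hpairs, sum_insert (by decide), sum_insert (by decide), sum_insert (by decide),
    sum_insert (by decide), sum_insert (by decide), sum_singleton]
  have h01 := h0 1; have h12 := hpos 1 2 one_pos; have h13 := hpos 1 3 one_pos
  rw [Nat.multichoose_one_right] at h01 h12 h13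
  linarith [h0 2, h0 3, hpos 2 3 two_pos]

noncomputable def greedySet (h k : ℕ) : Finset ℕ := (greedyAux h k).2

section Greedy

variable (h : ℕ)

theorem greedySet_zero : greedySet h 0 = {0} := rfl

theorem greedySet_succ (k : ℕ) :
    greedySet h (k + 1) = insert (greedy h (k + 1)) (greedySet h k) :=
  rfl

theorem greedy_one : greedy h 1 = 1 := rfl

theorem greedy_add_two (k : ℕ) : greedy h (k + 2) =
    sInf {x | greedy h (k + 1) < x ∧ IsBhSet h (insert x (greedySet h (k + 1)) : Finset ℕ)} :=
  rfl

theorem greedySet_mono : Monotone (greedySet h) :=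
  monotone_nat_of_le_succ fun k => by rw [greedySet_succ]; exact subset_insert _ _

theorem zero_mem_greedySet (k : ℕ) : 0 ∈ greedySet h k :=
  greedySet_mono h k.zero_le (by simp [greedySet_zero])

theorem card_greedySet_le (k : ℕ) : (greedySet h k).card ≤ k + 1 := by
  induction k with
  | zero => simp [greedySet_zero]
  | succ k ih => rw [greedySet_succ]; exact (card_insert_le _ _).trans (by omega)

theorem isBhSet_greedySet : ∀ k, IsBhSet h (greedySet h k)
  | 0 => (isBhSet_zero_one h).mono (by simp [greedySet_zero])
  | 1 => (isBhSet_zero_one h).mono <| by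
    simp [greedySet_succ, greedySet_zero, greedy_one, Set.pair_comm]
  | k + 2 => by
    set S := {x | greedy h (k + 1) < x ∧ IsBhSet h (insert x (greedySet h (k + 1)) : Finset ℕ)}
    obtain ⟨x, hx⟩ := Infinite.exists_notMem_finset
      (forbidden h (greedySet h (k + 1)) ∪ range (greedy h (k + 1) + 1))
    rw [mem_union, mem_range, not_or, not_lt] at hx
    have hS : S.Nonempty := ⟨x, by omega, by_contra fun hbad => hx.1
      (mem_forbidden_of_not_isBhSet_insert (isBhSet_greedySet (k + 1))
        (zero_mem_greedySet h _) hbad)⟩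
    rw [greedySet_succ, greedy_add_two]
    exact (Nat.sInf_mem hS).2

theorem mem_greedySet_or_not_isBhSet_insert (k : ℕ) {y : ℕ} (hy : y < greedy h (k + 1)) :
    y ∈ greedySet h k ∨ ¬IsBhSet h (insert y (greedySet h k) : Finset ℕ) := by
  induction k generalizing y with
  | zero => simp_all [greedy_one, greedySet_zero]
  | succ k ih =>
    rcases lt_trichotomy y (greedy h (k + 1)) with hlt | rfl | hgt
    · refine (ih hlt).imp (fun hy => greedySet_mono h k.le_succ hy) fun hbad hB => hbad ?_
      refine hB.mono (coe_subset.2 ?_)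
      rw [greedySet_succ]
      exact insert_subset_insert y (subset_insert _ _)
    · simp [greedySet_succ]
    · rw [greedy_add_two] at hy
      exact Or.inr fun hB => Nat.notMem_of_lt_sInf hy ⟨hgt, hB⟩

theorem greedy_succ_le (k : ℕ) :
    greedy h (k + 1) ≤ k + 1 + (forbidden h (greedySet h k)).card := by
  have hcover : range (greedy h (k + 1)) ⊆ greedySet h k ∪ forbidden h (greedySet h k) :=
    fun y hy => (mem_greedySet_or_not_isBhSet_insert h k (mem_range.1 hy)).elim
      (mem_union_left _) fun hbad => mem_union_right _ <| mem_forbidden_of_not_isBhSet_insert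
        (isBhSet_greedySet h k) (zero_mem_greedySet h k) hbad
  calc greedy h (k + 1) = (range (greedy h (k + 1))).card := (card_range _).symm
    _ ≤ (greedySet h k ∪ forbidden h (greedySet h k)).card := card_le_card hcover
    _ ≤ (greedySet h k).card + (forbidden h (greedySet h k)).card := card_union_le _ _
    _ ≤ k + 1 + (forbidden h (greedySet h k)).card := by grw [card_greedySet_le]

end Greedy

theorem stmt_8 (k : ℕ) (hk : 1 ≤ k) :
    (greedy 3 k : ℚ) ≤ (1 / 12) * (k : ℚ) ^ 5 + (5 / 12) * (k : ℚ) ^ 4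
      + (3 / 4) * (k : ℚ) ^ 3 + (13 / 12) * (k : ℚ) ^ 2 + (2 / 3) * (k : ℚ) := by
  obtain ⟨n, rfl⟩ : ∃ n, k = n + 1 := ⟨k - 1, by omega⟩
  rcases Nat.eq_zero_or_pos n with rfl | hn
  · norm_num [greedy_one]
  have hbound := (greedy_succ_le 3 n).trans <|
    Nat.add_le_add_left (card_forbidden_three_le (card_greedySet_le 3 n)) _
  have hq := (Nat.cast_le (α := ℚ)).2 hbound
  push_cast [Nat.cast_multichoose_two, Nat.cast_multichoose_three] at hq
  have hn' : (1 : ℚ) ≤ n := by exact_mod_cast hn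
  push_cast
  nlinarith [hq, hn']
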